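/- arXiv:2603.01709 — 2 statements merged into one kernel-verified Lean document; each statement's English description precedes it below -/
import Mathlib

section
/- Consider the ODE ż = S ∇H(z) − D(t) z, where S is a constant matrix with symmetric part negative semidefinite (in particular possibly skew-symmetric), H is C² with ∇H(0) = 0, and for all (z,t) the symmetric part of P_H(z) D(t) is positive semidefinite, where P_H(z) = ∫₀¹ ∇²H(sz) ds. Then along any solution z(t), the energy H(z(t)) is nonincreasing: d/dt H(z(t)) = ∇H(z)ᵀ S ∇H(z) − zᵀ sym(P_H(z) D(t)) z ≤ 0. -/
/-!
Along a solution the chain rule gives `d/dt H(z) = ∇H(z) ⬝ S ∇H(z) - ∇H(z) ⬝ D z`. The fundamental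
theorem of calculus on the segment from `0` to `z` gives `∇H(z) = ∇H(0) + P_H(z) z = P_H(z) z`, and
`P_H(z)` is symmetric because Hessians are, so `∇H(z) ⬝ D z = zᵀ P_H(z) D z = zᵀ sym(P_H(z) D) z`,
which is nonnegative by the ECLD condition. The first term is `≤ 0` because a quadratic form only
sees the symmetric part of `S`.
-/

open Matrix

noncomputable def dotCLM {n : ℕ} (g : Fin n → ℝ) : (Fin n → ℝ) →L[ℝ] ℝ :=
  ∑ i, g i • ContinuousLinearMap.proj i

/-- symmetric part of a matrix -/
noncomputable def symPart {n : ℕ} (A : Matrix (Fin n) (Fin n) ℝ) : Matrix (Fin n) (Fin n) ℝ :=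
  (1/2 : ℝ) • (A + Aᵀ)

/-- The energy metric `P_H(z) = ∫₀¹ ∇²H(sz) ds` (defined entrywise). -/
noncomputable def energyMetric {n : ℕ}
    (hessH : (Fin n → ℝ) → Matrix (Fin n) (Fin n) ℝ) (z : Fin n → ℝ) :
    Matrix (Fin n) (Fin n) ℝ :=
  Matrix.of fun i j => ∫ s in (0:ℝ)..1, hessH (s • z) i j

lemma dotCLM_apply {n : ℕ} (g v : Fin n → ℝ) : dotCLM g v = g ⬝ᵥ v := by
  simp [dotCLM, dotProduct]

lemma dotProduct_symPart_mulVec {n : ℕ} (A : Matrix (Fin n) (Fin n) ℝ) (x : Fin n → ℝ) :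
    x ⬝ᵥ (symPart A).mulVec x = x ⬝ᵥ A.mulVec x := by
  have htranspose : x ⬝ᵥ Aᵀ.mulVec x = x ⬝ᵥ A.mulVec x := by
    rw [mulVec_transpose, dotProduct_comm, ← dotProduct_mulVec]
  simp only [symPart, smul_mulVec, add_mulVec, dotProduct_add, dotProduct_smul, htranspose,
    smul_eq_mul]
  ring

lemma mulVec_dotProduct_mulVec_eq_symPart {n : ℕ} {P : Matrix (Fin n) (Fin n) ℝ} (hP : P.IsSymm)
    (D : Matrix (Fin n) (Fin n) ℝ) (x : Fin n → ℝ) :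
    P.mulVec x ⬝ᵥ D.mulVec x = x ⬝ᵥ (symPart (P * D)).mulVec x := by
  rw [dotProduct_symPart_mulVec, ← mulVec_mulVec, dotProduct_mulVec, ← vecMul_transpose, hP,
    dotProduct_mulVec, dotProduct_mulVec]

lemma isSymm_of_hasFDerivAt_gradient {n : ℕ} {H : (Fin n → ℝ) → ℝ}
    {gradH : (Fin n → ℝ) → (Fin n → ℝ)} {A : Matrix (Fin n) (Fin n) ℝ} {x : Fin n → ℝ}
    (hgrad : ∀ y, HasFDerivAt H (dotCLM (gradH y)) y)
    (hA : HasFDerivAt gradH (LinearMap.toContinuousLinearMap (mulVecLin A)) x) :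
    A.IsSymm := by
  let dot : (Fin n → ℝ) →L[ℝ] (Fin n → ℝ) →L[ℝ] ℝ :=
    ∑ i, (ContinuousLinearMap.proj i).smulRight (ContinuousLinearMap.proj i)
  have hdot : ∀ g, dot g = dotCLM g := fun g => by
    ext v
    simp [dot, dotCLM]
  have hsecond : HasFDerivAt (fun y => dotCLM (gradH y))
      (dot.comp (LinearMap.toContinuousLinearMap (mulVecLin A))) x := by
    simpa only [Function.comp_def, hdot] using dot.hasFDerivAt.comp x hA
  refine IsSymm.ext fun i j => ?_
  simpa [dot, Pi.single_apply] using
    second_derivative_symmetric hgrad hsecond (Pi.single i 1) (Pi.single j 1)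

lemma energyMetric_isSymm {n : ℕ} {hessH : (Fin n → ℝ) → Matrix (Fin n) (Fin n) ℝ}
    (hsymm : ∀ x, (hessH x).IsSymm) (z : Fin n → ℝ) : (energyMetric hessH z).IsSymm :=
  IsSymm.ext fun i j => by simp only [energyMetric, of_apply, (hsymm _).apply]

lemma energyMetric_mulVec_self {n : ℕ} {g : (Fin n → ℝ) → (Fin n → ℝ)}
    {hessH : (Fin n → ℝ) → Matrix (Fin n) (Fin n) ℝ}
    (hg : ∀ x, HasFDerivAt g (LinearMap.toContinuousLinearMap (mulVecLin (hessH x))) x)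
    (hcont : Continuous hessH) (z : Fin n → ℝ) :
    (energyMetric hessH z).mulVec z = g z - g 0 := by
  have hderiv : ∀ s : ℝ, HasDerivAt (fun s : ℝ => g (s • z)) ((hessH (s • z)).mulVec z) s :=
    fun s => by
      simpa [Function.comp_def] using
        (hg (s • z)).comp_hasDerivAt s ((hasDerivAt_id s).smul_const z)
  funext i
  calc (energyMetric hessH z).mulVec z i
      = ∑ j, (∫ s in (0:ℝ)..1, hessH (s • z) i j) * z j := rfl
    _ = ∫ s in (0:ℝ)..1, ∑ j, hessH (s • z) i j * z j := by
      rw [intervalIntegral.integral_finsetSum fun j _ =>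
        Continuous.intervalIntegrable (by fun_prop) 0 1]
      simp only [intervalIntegral.integral_mul_const]
    _ = ∫ s in (0:ℝ)..1, (hessH (s • z)).mulVec z i := rfl
    _ = g z i - g 0 i := by
      simpa using intervalIntegral.integral_eq_sub_of_hasDerivAt
        (fun s _ => hasDerivAt_pi.1 (hderiv s) i)
        (Continuous.intervalIntegrable (by fun_prop) 0 1)

/-- for `ż = S∇H(z) − D(t)z` with `sym S ⪯ 0` and the ECLD condition
`sym(P_H(z)D(t)) ⪰ 0`, the energy decays:
`d/dt H(z(t)) = ∇H(z)ᵀ S ∇H(z) − zᵀ sym(P_H(z)D(t)) z ≤ 0`. -/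
theorem stmt1 {n : ℕ} (H : (Fin n → ℝ) → ℝ)
    (gradH : (Fin n → ℝ) → (Fin n → ℝ))
    (hessH : (Fin n → ℝ) → Matrix (Fin n) (Fin n) ℝ)
    (S : Matrix (Fin n) (Fin n) ℝ)
    (D : ℝ → Matrix (Fin n) (Fin n) ℝ)
    (hgrad : ∀ z, HasFDerivAt H (dotCLM (gradH z)) z)
    (hhess : ∀ z, HasFDerivAt gradH
      (LinearMap.toContinuousLinearMap (Matrix.mulVecLin (hessH z))) z)
    (hhessCont : Continuous hessH)
    (hgrad0 : gradH 0 = 0)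
    (hS : ∀ x : Fin n → ℝ, x ⬝ᵥ (symPart S).mulVec x ≤ 0)
    (hECLD : ∀ (z : Fin n → ℝ) (t : ℝ),
      (symPart (energyMetric hessH z * D t)).PosSemidef)
    (z : ℝ → (Fin n → ℝ))
    (hz : ∀ t, HasDerivAt z (S.mulVec (gradH (z t)) - (D t).mulVec (z t)) t) :
    ∀ t, HasDerivAt (fun t => H (z t))
        (gradH (z t) ⬝ᵥ S.mulVec (gradH (z t))
          - z t ⬝ᵥ (symPart (energyMetric hessH (z t) * D t)).mulVec (z t)) t
      ∧ gradH (z t) ⬝ᵥ S.mulVec (gradH (z t))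
          - z t ⬝ᵥ (symPart (energyMetric hessH (z t) * D t)).mulVec (z t) ≤ 0 := by
  intro t
  have hP : (energyMetric hessH (z t)).IsSymm :=
    energyMetric_isSymm (fun x => isSymm_of_hasFDerivAt_gradient hgrad (hhess x)) (z t)
  have hgradP : gradH (z t) = (energyMetric hessH (z t)).mulVec (z t) := by
    rw [energyMetric_mulVec_self hhess hhessCont, hgrad0, sub_zero]
  have hdamping : gradH (z t) ⬝ᵥ (D t).mulVec (z t)
      = z t ⬝ᵥ (symPart (energyMetric hessH (z t) * D t)).mulVec (z t) := by
    rw [hgradP, mulVec_dotProduct_mulVec_eq_symPart hP]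
  refine ⟨?_, ?_⟩
  · have hchain := (hgrad (z t)).comp_hasDerivAt t (hz t)
    rwa [dotCLM_apply, dotProduct_sub, hdamping] at hchain
  · have hconservative := hS (gradH (z t))
    rw [dotProduct_symPart_mulVec] at hconservative
    have hdissipative := (hECLD (z t) t).dotProduct_mulVec_nonneg (z t)
    simp only [star_trivial] at hdissipative
    linarith
end

section
/- Let Ψ₁ and Ψ₂ be invertible matrices such that Ψ₁ᵀ M Ψ₁ − M ⪯ 0 and M − Ψ₂⁻ᵀ M Ψ₂⁻¹ ⪯ 0 for a symmetric positive definite matrix M. Suppose the middle step of a splitting scheme preserves the quadratic-plus-scalar energy: ½ (z⁻)ᵀ M z⁻ + (r⁻)² = ½ (z⁺)ᵀ M z⁺ + (r⁺)², where z⁻ = Ψ₁ zⁿ, r⁻ = rⁿ, zⁿ⁺¹ = Ψ₂ z⁺, rⁿ⁺¹ = r⁺. Then the full step is energy-dissipative: ½ (zⁿ⁺¹)ᵀ M zⁿ⁺¹ + (rⁿ⁺¹)² ≤ ½ (zⁿ)ᵀ M zⁿ + (rⁿ)². -/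
open Matrix

def NegSemidef {m : Type*} [Fintype m] (A : Matrix m m ℝ) : Prop :=
  Aᵀ = A ∧ ∀ x : m → ℝ, x ⬝ᵥ A.mulVec x ≤ 0

section

variable {m : Type*} [Fintype m]

theorem dotProduct_mulVec_mulVec_eq_conj {R : Type*} [CommSemiring R] (A B : Matrix m m R)
    (x : m → R) : B *ᵥ x ⬝ᵥ A *ᵥ (B *ᵥ x) = x ⬝ᵥ (Bᵀ * A * B) *ᵥ x := by
  rw [← mulVec_mulVec, ← mulVec_mulVec, dotProduct_mulVec x Bᵀ, vecMul_transpose]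

theorem NegSemidef.dotProduct_mulVec_le {A B : Matrix m m ℝ} (h : NegSemidef (A - B))
    (x : m → ℝ) : x ⬝ᵥ A *ᵥ x ≤ x ⬝ᵥ B *ᵥ x := by
  simpa only [sub_mulVec, dotProduct_sub, sub_nonpos] using h.2 x

theorem NegSemidef.dotProduct_mulVec_conj_le {M Ψ : Matrix m m ℝ}
    (h : NegSemidef (Ψᵀ * M * Ψ - M)) (z : m → ℝ) :
    Ψ *ᵥ z ⬝ᵥ M *ᵥ (Ψ *ᵥ z) ≤ z ⬝ᵥ M *ᵥ z := by
  rw [dotProduct_mulVec_mulVec_eq_conj]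
  exact h.dotProduct_mulVec_le z

theorem NegSemidef.dotProduct_mulVec_conj_le_of_inv [DecidableEq m] {M Ψ : Matrix m m ℝ}
    (hΨ : IsUnit Ψ) (h : NegSemidef (M - (Ψ⁻¹)ᵀ * M * Ψ⁻¹)) (z : m → ℝ) :
    Ψ *ᵥ z ⬝ᵥ M *ᵥ (Ψ *ᵥ z) ≤ z ⬝ᵥ M *ᵥ z := by
  have hz : Ψ⁻¹ *ᵥ (Ψ *ᵥ z) = z := by
    rw [mulVec_mulVec, nonsing_inv_mul _ ((isUnit_iff_isUnit_det _).mp hΨ), one_mulVec]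
  calc Ψ *ᵥ z ⬝ᵥ M *ᵥ (Ψ *ᵥ z)
      ≤ Ψ *ᵥ z ⬝ᵥ ((Ψ⁻¹)ᵀ * M * Ψ⁻¹) *ᵥ (Ψ *ᵥ z) := h.dotProduct_mulVec_le _
    _ = z ⬝ᵥ M *ᵥ z := by rw [← dotProduct_mulVec_mulVec_eq_conj, hz]

end

theorem stmt13_general {n : ℕ} (M Ψ₁ Ψ₂ : Matrix (Fin n) (Fin n) ℝ)
    (hΨ₂ : IsUnit Ψ₂)
    (h1 : NegSemidef (Ψ₁ᵀ * M * Ψ₁ - M))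
    (h2 : NegSemidef (M - (Ψ₂⁻¹)ᵀ * M * Ψ₂⁻¹))
    (zn zm zp zn1 : Fin n → ℝ) (rn rm rp rn1 : ℝ)
    (hzm : zm = Ψ₁.mulVec zn) (hrm : rm = rn)
    (hzn1 : zn1 = Ψ₂.mulVec zp) (hrn1 : rn1 = rp)
    (hmid : (1/2 : ℝ) * (zm ⬝ᵥ M.mulVec zm) + rm ^ 2
      = (1/2 : ℝ) * (zp ⬝ᵥ M.mulVec zp) + rp ^ 2) :
    (1/2 : ℝ) * (zn1 ⬝ᵥ M.mulVec zn1) + rn1 ^ 2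
      ≤ (1/2 : ℝ) * (zn ⬝ᵥ M.mulVec zn) + rn ^ 2 := by
  subst hzm hrm hzn1 hrn1
  have hfirst := h1.dotProduct_mulVec_conj_le zn
  have hlast := h2.dotProduct_mulVec_conj_le_of_inv hΨ₂ zp
  linarith

/-- abstract energy stability of the splitting scheme. If
`Ψ₁ᵀMΨ₁ − M ⪯ 0`, `M − Ψ₂⁻ᵀMΨ₂⁻¹ ⪯ 0` for `M ≻ 0` with `Ψ₁, Ψ₂` invertible, and
the middle step conserves `½ zᵀMz + r²`, then the full step
`z⁻ = Ψ₁zⁿ, r⁻ = rⁿ, zⁿ⁺¹ = Ψ₂z⁺, rⁿ⁺¹ = r⁺` is energy-dissipative. -/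
theorem stmt13 {n : ℕ} (M Ψ₁ Ψ₂ : Matrix (Fin n) (Fin n) ℝ)
    (hMsymm : Mᵀ = M) (hMpd : M.PosDef)
    (hΨ₁ : IsUnit Ψ₁) (hΨ₂ : IsUnit Ψ₂)
    (h1 : NegSemidef (Ψ₁ᵀ * M * Ψ₁ - M))
    (h2 : NegSemidef (M - (Ψ₂⁻¹)ᵀ * M * Ψ₂⁻¹))
    (zn zm zp zn1 : Fin n → ℝ) (rn rm rp rn1 : ℝ)
    (hzm : zm = Ψ₁.mulVec zn) (hrm : rm = rn)
    (hzn1 : zn1 = Ψ₂.mulVec zp) (hrn1 : rn1 = rp)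
    (hmid : (1/2 : ℝ) * (zm ⬝ᵥ M.mulVec zm) + rm ^ 2
      = (1/2 : ℝ) * (zp ⬝ᵥ M.mulVec zp) + rp ^ 2) :
    (1/2 : ℝ) * (zn1 ⬝ᵥ M.mulVec zn1) + rn1 ^ 2
      ≤ (1/2 : ℝ) * (zn ⬝ᵥ M.mulVec zn) + rn ^ 2 :=
  stmt13_general M Ψ₁ Ψ₂ hΨ₂ h1 h2 zn zm zp zn1 rn rm rp rn1 hzm hrm hzn1 hrn1 hmid
end
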